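/- arXiv:1802.04110 — 6 statements merged into one kernel-verified Lean document; each statement's English description precedes it below -/
import Mathlib

section
/- Let (K, D) be a generalized mean that is i-slice-continuous and such that the bounded sets are small for sets with infinite mean. Let H ⊆ ℝ be unbounded with H^{0−} ∈ D, H^{0+} ∈ D, K(H^{0−}) = −∞ and K(H^{0+}) = +∞. Then H ∉ D. -/
open Set Filter Topology Bornology

/-- A generalized mean: a domain `D` of nonempty subsets of `ℝ`, closed under finite
unions and under intersections with intervals (when nonempty), together with a value
`K H ∈ ℝ̄` satisfying `inf H ≤ K H ≤ sup H`. -/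
structure GenMean where
  D : Set (Set ℝ)
  K : Set ℝ → EReal
  nonempty_of_mem : ∀ H ∈ D, H.Nonempty
  union_mem : ∀ H₁ ∈ D, ∀ H₂ ∈ D, H₁ ∪ H₂ ∈ D
  inter_interval_mem : ∀ H ∈ D, ∀ I : Set ℝ, I.OrdConnected → (H ∩ I).Nonempty → H ∩ I ∈ D
  iInf_le_K : ∀ H ∈ D, (⨅ x ∈ H, (x : EReal)) ≤ K H
  K_le_iSup : ∀ H ∈ D, K H ≤ ⨆ x ∈ H, (x : EReal)

/-- An extended real is finite. -/
def EFinite (x : EReal) : Prop := x ≠ ⊤ ∧ x ≠ ⊥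

/-- `K` is i-slice-continuous: `x ↦ K (H^{x−})` and `x ↦ K (H^{x+})` are continuous
(into `ℝ̄`) on the sets where the slices are nonempty, and `K (H^{x−}) → K H` as
`x → +∞`, `K (H^{x+}) → K H` as `x → −∞`. -/
def GenMean.ISliceCont (M : GenMean) : Prop :=
  ∀ H ∈ M.D,
    ContinuousOn (fun x : ℝ => M.K (H ∩ Iic x)) {x : ℝ | (H ∩ Iic x).Nonempty} ∧
    ContinuousOn (fun x : ℝ => M.K (H ∩ Ici x)) {x : ℝ | (H ∩ Ici x).Nonempty} ∧
    Tendsto (fun x : ℝ => M.K (H ∩ Iic x)) atTop (nhds (M.K H)) ∧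
    Tendsto (fun x : ℝ => M.K (H ∩ Ici x)) atBot (nhds (M.K H))

/-- `K` is slice-continuous: for every `y`, `x ↦ K (H ∩ [x, y])` is continuous
where defined and tends to `K (H^{y−})` as `x → −∞`. -/
def GenMean.SliceCont (M : GenMean) : Prop :=
  ∀ H ∈ M.D, ∀ y : ℝ,
    ContinuousOn (fun x : ℝ => M.K (H ∩ Icc x y)) {x : ℝ | x ≤ y ∧ (H ∩ Icc x y).Nonempty} ∧
    Tendsto (fun x : ℝ => M.K (H ∩ Icc x y)) atBot (nhds (M.K (H ∩ Iic y)))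

/-- `K` is part-slice-continuous. -/
def GenMean.PartSliceCont (M : GenMean) : Prop :=
  ∀ H₁ ∈ M.D, ∀ H₂ ∈ M.D,
    ContinuousOn (fun x : ℝ => M.K (H₁ ∪ (H₂ ∩ Iic x))) {x : ℝ | H₁ ∪ (H₂ ∩ Iic x) ∈ M.D} ∧
    ContinuousOn (fun x : ℝ => M.K (H₁ ∪ (H₂ ∩ Ici x))) {x : ℝ | H₁ ∪ (H₂ ∩ Ici x) ∈ M.D}

/-- The bounded sets are small for sets with infinite mean. -/
def GenMean.BoundedSmall (M : GenMean) : Prop :=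
  ∀ B ∈ M.D, IsBounded B → ∀ H ∈ M.D, H ∪ B ∈ M.D →
    (M.K H = ⊤ → M.K (H ∪ B) = ⊤) ∧ (M.K H = ⊥ → M.K (H ∪ B) = ⊥)

/-- `K` is monotone: if `sup H₁ ≤ inf H₂` (i.e. every element of `H₁` is `≤` every
element of `H₂`) then `K H₁ ≤ K (H₁ ∪ H₂) ≤ K H₂`. -/
def GenMean.MonotoneMean (M : GenMean) : Prop :=
  ∀ H₁ ∈ M.D, ∀ H₂ ∈ M.D, H₁ ∪ H₂ ∈ M.D →
    (∀ a ∈ H₁, ∀ b ∈ H₂, a ≤ b) →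
    M.K H₁ ≤ M.K (H₁ ∪ H₂) ∧ M.K (H₁ ∪ H₂) ≤ M.K H₂

/-- `K` is base-monotone. -/
def GenMean.BaseMonotone (M : GenMean) : Prop :=
  ∀ H₁ ∈ M.D, ∀ H₂ ∈ M.D, H₁ ∪ H₂ ∈ M.D → Disjoint H₁ H₂ →
    min (M.K H₁) (M.K H₂) ≤ M.K (H₁ ∪ H₂) ∧ M.K (H₁ ∪ H₂) ≤ max (M.K H₁) (M.K H₂)

/-- `K` is disjoint-monotone. -/
def GenMean.DisjointMonotone (M : GenMean) : Prop :=
  ∀ H₁ ∈ M.D, ∀ H₂ ∈ M.D, H₁ ∪ H₂ ∈ M.D → Disjoint H₁ H₂ → M.K H₁ ≤ M.K H₂ →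
    M.K H₁ ≤ M.K (H₁ ∪ H₂) ∧ M.K (H₁ ∪ H₂) ≤ M.K H₂

/-- `K` is subset-finite: subsets (in the domain) of sets with finite mean have finite mean. -/
def GenMean.SubsetFinite (M : GenMean) : Prop :=
  ∀ H ∈ M.D, ∀ B ∈ M.D, B ⊆ H → EFinite (M.K H) → EFinite (M.K B)

/-- `K` is finite-independent: adding or removing a finite set does not change
the mean of an infinite set. -/
def GenMean.FiniteIndependent (M : GenMean) : Prop :=
  ∀ H ∈ M.D, H.Infinite → ∀ V : Set ℝ, V.Finite → H ∪ V ∈ M.D → H \ V ∈ M.D →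
    M.K (H ∪ V) = M.K H ∧ M.K (H \ V) = M.K H

/-- `K` is interval-infinite: translating a non-degenerate interval to `±∞`
pushes the mean to `±∞`. -/
def GenMean.IntervalInfinite (M : GenMean) : Prop :=
  ∀ a b : ℝ, a < b → ∀ H : Set ℝ, IsBounded H →
    (∀ x : ℝ, H ∪ ((fun t : ℝ => t + x) '' Icc a b) ∈ M.D) →
    Tendsto (fun x : ℝ => M.K (H ∪ ((fun t : ℝ => t + x) '' Icc a b))) atTop (nhds ⊤) ∧
    Tendsto (fun x : ℝ => M.K (H ∪ ((fun t : ℝ => t + x) '' Icc a b))) atBot (nhds ⊥)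

/-- `K` is symmetric: if `H` is invariant under the reflection `t ↦ 2s − t`
then `K H = s`. -/
def GenMean.SymmetricMean (M : GenMean) : Prop :=
  ∀ H ∈ M.D, ∀ s : ℝ, (fun t : ℝ => 2 * s - t) '' H = H → M.K H = (s : EReal)

open scoped Classical in
/-- The base-monotonicity coefficient `c(A, B)` (meaningful when all the means
involved are finite): `c(A,B) = (K(A∪B) − K(B))/(K(A) − K(B))` if `K A ≠ K B`, else `0`. -/
noncomputable def GenMean.coeff (M : GenMean) (A B : Set ℝ) : ℝ :=
  if M.K A = M.K B then 0
  else ((M.K (A ∪ B)).toReal - (M.K B).toReal) / ((M.K A).toReal - (M.K B).toReal)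

/-- `K` is strong-base-monotone. -/
def GenMean.StrongBaseMonotone (M : GenMean) : Prop :=
  M.BaseMonotone ∧
  ∀ H₁ ∈ M.D, ∀ H₂ ∈ M.D, ∀ B ∈ M.D, H₁ ⊆ H₂ → Disjoint H₂ B →
    H₁ ∪ B ∈ M.D → H₂ ∪ B ∈ M.D →
    EFinite (M.K H₁) → EFinite (M.K H₂) → EFinite (M.K B) →
    EFinite (M.K (H₁ ∪ B)) → EFinite (M.K (H₂ ∪ B)) →
    M.coeff H₁ B ≤ M.coeff H₂ B

/-- `K̂ H = L`: the double limit `lim_{x→−∞, y→+∞} K (H ∩ [x, y]) = L` in `ℝ̄`. -/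
def GenMean.HatLim (M : GenMean) (H : Set ℝ) (L : EReal) : Prop :=
  Tendsto (fun p : ℝ × ℝ => M.K (H ∩ Icc p.1 p.2)) (atBot ×ˢ atTop) (nhds L)

theorem stmt_0 (M : GenMean) (hc : M.ISliceCont) (hs : M.BoundedSmall)
    (H : Set ℝ) (hub : ¬ IsBounded H)
    (h1 : H ∩ Iic 0 ∈ M.D) (h2 : H ∩ Ici 0 ∈ M.D)
    (k1 : M.K (H ∩ Iic 0) = ⊥) (k2 : M.K (H ∩ Ici 0) = ⊤) :
    H ∉ M.D := by
  intro hH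
  obtain ⟨-, -, hT, hBlim⟩ := hc H hH
  have hne1 : (H ∩ Iic 0).Nonempty := M.nonempty_of_mem _ h1
  have hne2 : (H ∩ Ici 0).Nonempty := M.nonempty_of_mem _ h2
  -- K (H ∩ Iic x) = ⊥ for all x ≥ 0
  have hbot : ∀ x : ℝ, 0 ≤ x → M.K (H ∩ Iic x) = ⊥ := by
    intro x hx
    have hsplit : H ∩ Iic x = (H ∩ Iic 0) ∪ (H ∩ Icc 0 x) := by
      rw [← inter_union_distrib_left, Iic_union_Icc_eq_Iic hx]
    have hIic : H ∩ Iic x ∈ M.D :=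
      M.inter_interval_mem H hH (Iic x) ordConnected_Iic
        (hne1.mono (inter_subset_inter_right _ (Iic_subset_Iic.mpr hx)))
    rcases eq_empty_or_nonempty (H ∩ Icc 0 x) with he | hne
    · rw [hsplit, he, union_empty, k1]
    · have hB : H ∩ Icc 0 x ∈ M.D :=
        M.inter_interval_mem H hH (Icc 0 x) ordConnected_Icc hne
      have hbdd : IsBounded (H ∩ Icc 0 x) :=
        (Metric.isBounded_Icc 0 x).subset inter_subset_right
      have := (hs _ hB hbdd _ h1 (hsplit ▸ hIic)).2 k1
      rw [hsplit]; exact this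
  have htop : ∀ x : ℝ, x ≤ 0 → M.K (H ∩ Ici x) = ⊤ := by
    intro x hx
    have hsplit : H ∩ Ici x = (H ∩ Ici 0) ∪ (H ∩ Icc x 0) := by
      rw [← inter_union_distrib_left, union_comm (Ici 0), Icc_union_Ici_eq_Ici hx]
    have hIci : H ∩ Ici x ∈ M.D :=
      M.inter_interval_mem H hH (Ici x) ordConnected_Ici
        (hne2.mono (inter_subset_inter_right _ (Ici_subset_Ici.mpr hx)))
    rcases eq_empty_or_nonempty (H ∩ Icc x 0) with he | hne
    · rw [hsplit, he, union_empty, k2]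
    · have hB : H ∩ Icc x 0 ∈ M.D :=
        M.inter_interval_mem H hH (Icc x 0) ordConnected_Icc hne
      have hbdd : IsBounded (H ∩ Icc x 0) :=
        (Metric.isBounded_Icc x 0).subset inter_subset_right
      have := (hs _ hB hbdd _ h2 (hsplit ▸ hIci)).1 k2
      rw [hsplit]; exact this
  have hKbot : M.K H = ⊥ := by
    have h1' : Tendsto (fun _ : ℝ => (⊥ : EReal)) atTop (nhds (M.K H)) :=
      hT.congr' (eventually_atTop.2 ⟨0, hbot⟩)
    exact (tendsto_nhds_unique tendsto_const_nhds h1').symm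
  have hKtop : M.K H = ⊤ := by
    have h2' : Tendsto (fun _ : ℝ => (⊤ : EReal)) atBot (nhds (M.K H)) :=
      hBlim.congr' (eventually_atBot.2 ⟨0, htop⟩)
    exact (tendsto_nhds_unique tendsto_const_nhds h2').symm
  exact absurd (hKbot ▸ hKtop) (by simp)
end

section
/- Let (K, D) be a generalized mean that is i-slice-continuous and such that the bounded sets are small for sets with infinite mean. Let H ∈ D be unbounded and a ∈ ℝ with H^{a−} ≠ ∅, H^{a+} ≠ ∅, K(H^{a−}) > −∞ and K(H^{a+}) = +∞. Then K(H) = +∞. -/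
open Set Filter Topology Bornology

theorem stmt_1 (M : GenMean) (hc : M.ISliceCont) (hs : M.BoundedSmall)
    (H : Set ℝ) (hH : H ∈ M.D) (hub : ¬ IsBounded H) (a : ℝ)
    (hne1 : (H ∩ Iic a).Nonempty) (hne2 : (H ∩ Ici a).Nonempty)
    (k1 : ⊥ < M.K (H ∩ Iic a)) (k2 : M.K (H ∩ Ici a) = ⊤) :
    M.K H = ⊤ := by
  have hH' : H ∩ Ici a ∈ M.D :=
    M.inter_interval_mem H hH (Ici a) ordConnected_Ici hne2
  have key : ∀ y ≤ a, M.K (H ∩ Ici y) = ⊤ := by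
    intro y hy
    by_cases hB : (H ∩ Icc y a).Nonempty
    · have hBD : H ∩ Icc y a ∈ M.D :=
        M.inter_interval_mem H hH (Icc y a) ordConnected_Icc hB
      have hBbd : IsBounded (H ∩ Icc y a) :=
        (Metric.isBounded_Icc y a).subset inter_subset_right
      have hUy : (H ∩ Ici y).Nonempty :=
        hne2.mono (inter_subset_inter_right H (Ici_subset_Ici.2 hy))
      have hUyD : H ∩ Ici y ∈ M.D :=
        M.inter_interval_mem H hH (Ici y) ordConnected_Ici hUy
      have heq : (H ∩ Ici a) ∪ (H ∩ Icc y a) = H ∩ Ici y := by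
        ext x
        simp only [mem_union, mem_inter_iff, mem_Ici, mem_Icc]
        constructor
        · rintro (⟨hx, hax⟩ | ⟨hx, hyx, _⟩)
          · exact ⟨hx, hy.trans hax⟩
          · exact ⟨hx, hyx⟩
        · rintro ⟨hx, hyx⟩
          rcases le_or_gt a x with h | h
          · exact Or.inl ⟨hx, h⟩
          · exact Or.inr ⟨hx, hyx, h.le⟩
      have := (hs (H ∩ Icc y a) hBD hBbd (H ∩ Ici a) hH' (heq ▸ hUyD)).1 k2
      rwa [heq] at this
    · have heq : H ∩ Ici y = H ∩ Ici a := by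
        ext x
        simp only [mem_inter_iff, mem_Ici]
        constructor
        · rintro ⟨hx, hyx⟩
          refine ⟨hx, ?_⟩
          by_contra h
          exact hB ⟨x, hx, hyx, (not_le.1 h).le⟩
        · rintro ⟨hx, hax⟩
          exact ⟨hx, hy.trans hax⟩
      rw [heq]; exact k2
  have htend : Tendsto (fun y : ℝ => M.K (H ∩ Ici y)) atBot (nhds (M.K H)) :=
    (hc H hH).2.2.2
  have htop : Tendsto (fun y : ℝ => M.K (H ∩ Ici y)) atBot (nhds (⊤ : EReal)) := by
    refine Tendsto.congr' ?_ tendsto_const_nhds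
    filter_upwards [eventually_le_atBot a] with y hy
    exact (key y hy).symm
  exact tendsto_nhds_unique htend htop
end

section
/- Let (K, D) be a generalized mean that is i-slice-continuous and such that the bounded sets are small for sets with infinite mean. If H ∈ D and K(H) is finite, then for every x ∈ ℝ with H^{x+} ≠ ∅ one has K(H^{x+}) < +∞, and for every x ∈ ℝ with H^{x−} ≠ ∅ one has K(H^{x−}) > −∞. -/
open Set Filter Topology Bornology

theorem stmt_2 (M : GenMean) (hc : M.ISliceCont) (hs : M.BoundedSmall)
    (H : Set ℝ) (hH : H ∈ M.D) (hfin : EFinite (M.K H)) :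
    ∀ x : ℝ, ((H ∩ Ici x).Nonempty → M.K (H ∩ Ici x) < ⊤) ∧
      ((H ∩ Iic x).Nonempty → ⊥ < M.K (H ∩ Iic x)) := by
  intro x
  constructor
  · intro hne
    by_contra hcon
    push_neg at hcon
    have htop : M.K (H ∩ Ici x) = ⊤ := top_le_iff.mp hcon
    have hDx : H ∩ Ici x ∈ M.D := M.inter_interval_mem H hH _ ordConnected_Ici hne
    have key : ∀ y ≤ x, M.K (H ∩ Ici y) = ⊤ := by
      intro y hy
      rcases (H ∩ Icc y x).eq_empty_or_nonempty with he | hne2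
      · have heq : H ∩ Ici y = H ∩ Ici x := by
          ext t
          simp only [mem_inter_iff, mem_Ici]
          constructor
          · rintro ⟨ht, hty⟩
            refine ⟨ht, ?_⟩
            by_contra hlt
            push_neg at hlt
            exact (eq_empty_iff_forall_notMem.mp he t) ⟨ht, hty, hlt.le⟩
          · rintro ⟨ht, htx⟩
            exact ⟨ht, hy.trans htx⟩
        rw [heq, htop]
      · have hsplit : H ∩ Ici y = (H ∩ Ici x) ∪ (H ∩ Icc y x) := by
          ext t
          simp only [mem_inter_iff, mem_Ici, mem_Icc, mem_union]
          constructor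
          · rintro ⟨ht, hty⟩
            rcases le_or_gt x t with h | h
            · exact Or.inl ⟨ht, h⟩
            · exact Or.inr ⟨ht, hty, h.le⟩
          · rintro (⟨ht, htx⟩ | ⟨ht, hty, _⟩)
            · exact ⟨ht, hy.trans htx⟩
            · exact ⟨ht, hty⟩
        have hDB : H ∩ Icc y x ∈ M.D := M.inter_interval_mem H hH _ ordConnected_Icc hne2
        have hDy : H ∩ Ici y ∈ M.D := M.inter_interval_mem H hH _ ordConnected_Ici
          (hne.mono (inter_subset_inter_right H (Ici_subset_Ici.mpr hy)))
        have hBb : IsBounded (H ∩ Icc y x) :=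
          (Metric.isBounded_Icc y x).subset inter_subset_right
        have := (hs _ hDB hBb _ hDx (hsplit ▸ hDy)).1 htop
        rw [hsplit]
        exact this
    have ht := (hc H hH).2.2.2
    have ht2 : Tendsto (fun y : ℝ => M.K (H ∩ Ici y)) atBot (nhds ⊤) := by
      refine Tendsto.congr' ?_ tendsto_const_nhds
      filter_upwards [eventually_le_atBot x] with y hy
      exact (key y hy).symm
    exact hfin.1 (tendsto_nhds_unique ht ht2)
  · intro hne
    by_contra hcon
    push_neg at hcon
    have hbot : M.K (H ∩ Iic x) = ⊥ := le_bot_iff.mp hcon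
    have hDx : H ∩ Iic x ∈ M.D := M.inter_interval_mem H hH _ ordConnected_Iic hne
    have key : ∀ y, x ≤ y → M.K (H ∩ Iic y) = ⊥ := by
      intro y hy
      rcases (H ∩ Icc x y).eq_empty_or_nonempty with he | hne2
      · have heq : H ∩ Iic y = H ∩ Iic x := by
          ext t
          simp only [mem_inter_iff, mem_Iic]
          constructor
          · rintro ⟨ht, hty⟩
            refine ⟨ht, ?_⟩
            by_contra hlt
            push_neg at hlt
            exact (eq_empty_iff_forall_notMem.mp he t) ⟨ht, hlt.le, hty⟩
          · rintro ⟨ht, htx⟩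
            exact ⟨ht, htx.trans hy⟩
        rw [heq, hbot]
      · have hsplit : H ∩ Iic y = (H ∩ Iic x) ∪ (H ∩ Icc x y) := by
          ext t
          simp only [mem_inter_iff, mem_Iic, mem_Icc, mem_union]
          constructor
          · rintro ⟨ht, hty⟩
            rcases le_or_gt t x with h | h
            · exact Or.inl ⟨ht, h⟩
            · exact Or.inr ⟨ht, h.le, hty⟩
          · rintro (⟨ht, htx⟩ | ⟨ht, _, hty⟩)
            · exact ⟨ht, htx.trans hy⟩
            · exact ⟨ht, hty⟩
        have hDB : H ∩ Icc x y ∈ M.D := M.inter_interval_mem H hH _ ordConnected_Icc hne2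
        have hDy : H ∩ Iic y ∈ M.D := M.inter_interval_mem H hH _ ordConnected_Iic
          (hne.mono (inter_subset_inter_right H (Iic_subset_Iic.mpr hy)))
        have hBb : IsBounded (H ∩ Icc x y) :=
          (Metric.isBounded_Icc x y).subset inter_subset_right
        have := (hs _ hDB hBb _ hDx (hsplit ▸ hDy)).2 hbot
        rw [hsplit]
        exact this
    have ht := (hc H hH).2.2.1
    have ht2 : Tendsto (fun y : ℝ => M.K (H ∩ Iic y)) atTop (nhds ⊥) := by
      refine Tendsto.congr' ?_ tendsto_const_nhds
      filter_upwards [eventually_ge_atTop x] with y hy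
      exact (key y hy).symm
    exact hfin.2 (tendsto_nhds_unique ht ht2)
end

section
/- Let (K, D) be a generalized mean that is interval-infinite and whose domain D contains every nonempty bounded closed interval. Then for every ε > 0 there exist a set H ⊆ ℝ and sequences (x_n), (y_n) with x_n → −∞, y_n → +∞ such that λ(H) < ε, H ∩ [x_n, y_n] ∈ D for every n, and the sequence (K(H ∩ [x_n, y_n]))_n does not converge in ℝ̄ (in fact K(H ∩ [x_n, y_n]) > 1 for infinitely many n and K(H ∩ [x_n, y_n]) < −1 for infinitely many n). Here λ denotes Lebesgue measure. -/
open Set Filter Topology Bornology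

/-!
Start from `{0}` and alternately adjoin a short interval far to the right and far to the left.
Interval-infiniteness lets each new interval be placed so far out that the mean of the enlarged
set exceeds `1` (respectively drops below `-1`). The lengths form a geometric series of sum
`ε / 2`, and since every later interval lies outside the current window `[-rₙ, rₙ]`, the union `H`
of all stages meets that window exactly in the `n`-th stage, whose mean oscillates.
-/

open MeasureTheory

theorem iUnion_inter_eq_of_monotone {α : Type*} {S W : ℕ → Set α} (hS : Monotone S)
    (hW : Monotone W) (hSW : ∀ n, S n ⊆ W n) (hstep : ∀ n, S (n + 1) ∩ W n ⊆ S n) (n : ℕ) :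
    (⋃ k, S k) ∩ W n = S n := by
  refine subset_antisymm ?_ (subset_inter (subset_iUnion S n) (hSW n))
  have hlater : ∀ k, n ≤ k → S k ∩ W n ⊆ S n := by
    intro k hk
    induction k, hk using Nat.le_induction with
    | base => exact inter_subset_left
    | succ k hk ih =>
      exact fun t ⟨htS, htW⟩ => ih ⟨hstep k ⟨htS, hW hk htW⟩, htW⟩
  rintro t ⟨ht, htW⟩
  obtain ⟨k, htk⟩ := mem_iUnion.1 ht
  rcases le_total k n with hkn | hnk
  · exact hS hkn htk
  · exact hlater k hnk ⟨htk, htW⟩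

theorem not_tendsto_of_frequently_lt_of_frequently_gt {ι α : Type*} [TopologicalSpace α]
    [LinearOrder α] [OrderClosedTopology α] {l : Filter ι} {u : ι → α} {a b : α} (hab : a < b)
    (hlow : ∃ᶠ i in l, u i < a) (hhigh : ∃ᶠ i in l, b < u i) :
    ¬ ∃ L, Tendsto u l (𝓝 L) := by
  rintro ⟨L, hL⟩
  have hLa : L ≤ a := isClosed_Iic.mem_of_frequently_of_tendsto (hlow.mono fun _ h => h.le) hL
  have hbL : b ≤ L := isClosed_Ici.mem_of_frequently_of_tendsto (hhigh.mono fun _ h => h.le) hL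
  exact (hab.trans_le (hbL.trans hLa)).false

namespace GenMean

variable {M : GenMean}

theorem IntervalInfinite.tendsto_K_union_Icc (hii : M.IntervalInfinite)
    (hIcc : ∀ a b : ℝ, a ≤ b → Icc a b ∈ M.D) {S : Set ℝ} (hS : S ∈ M.D) (hSb : IsBounded S)
    {δ : ℝ} (hδ : 0 < δ) :
    Tendsto (fun x => M.K (S ∪ Icc x (x + δ))) atTop (𝓝 ⊤) ∧
      Tendsto (fun x => M.K (S ∪ Icc x (x + δ))) atBot (𝓝 ⊥) := by
  have himage : ∀ x : ℝ, (fun t => t + x) '' Icc 0 δ = Icc x (x + δ) := fun x => by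
    rw [image_add_const_Icc, zero_add, add_comm]
  simpa only [himage] using
    hii 0 δ hδ S hSb fun x => himage x ▸ M.union_mem S hS _ (hIcc _ _ (by linarith))

structure Stage (M : GenMean) where
  set : Set ℝ
  radius : ℝ
  mem : set ∈ M.D
  subset_Icc : set ⊆ Icc (-radius) radius

structure Stage.Extends (n : ℕ) (δ : ℝ) (p q : M.Stage) : Prop where
  set_subset : p.set ⊆ q.set
  radius_add_one_le : p.radius + 1 ≤ q.radius
  inter_Icc_subset : q.set ∩ Icc (-p.radius) p.radius ⊆ p.set
  volume_le : volume q.set ≤ volume p.set + ENNReal.ofReal δ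
  one_lt_K : Even n → 1 < M.K q.set
  K_lt : Odd n → M.K q.set < -1

theorem Stage.radius_nonneg (p : M.Stage) : 0 ≤ p.radius := by
  obtain ⟨t, ht⟩ := M.nonempty_of_mem _ p.mem
  have := p.subset_Icc ht
  linarith [this.1, this.2]

theorem Stage.exists_extends (hii : M.IntervalInfinite)
    (hIcc : ∀ a b : ℝ, a ≤ b → Icc a b ∈ M.D) (p : M.Stage) (n : ℕ) {δ : ℝ} (hδ : 0 < δ) :
    ∃ q : M.Stage, p.Extends n δ q := by
  have hlim := hii.tendsto_K_union_Icc hIcc p.mem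
    ((Metric.isBounded_Icc _ _).subset p.subset_Icc) hδ
  obtain ⟨x, hfar, hKhigh, hKlow⟩ : ∃ x, (p.radius < x ∨ x + δ < -p.radius) ∧
      (Even n → 1 < M.K (p.set ∪ Icc x (x + δ))) ∧
      (Odd n → M.K (p.set ∪ Icc x (x + δ)) < -1) := by
    rcases n.even_or_odd with hn | hn
    · obtain ⟨x, hK, hx⟩ := ((hlim.1.eventually (Ioi_mem_nhds (EReal.coe_lt_top 1))).and
        (eventually_gt_atTop p.radius)).exists
      exact ⟨x, .inl hx, fun _ => hK, fun h => absurd hn (Nat.not_even_iff_odd.2 h)⟩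
    · obtain ⟨x, hK, hx⟩ := ((hlim.2.eventually (Iio_mem_nhds (EReal.bot_lt_coe (-1)))).and
        (eventually_lt_atBot (-p.radius - δ))).exists
      exact ⟨x, .inr (by linarith), fun h => absurd hn (Nat.not_odd_iff_even.2 h), fun _ => hK⟩
  have hr := p.radius_nonneg
  refine ⟨⟨p.set ∪ Icc x (x + δ), p.radius + |x| + δ + 1,
    M.union_mem _ p.mem _ (hIcc x (x + δ) (by linarith)), ?_⟩, subset_union_left,
    ?_, ?_, ?_, hKhigh, hKlow⟩
  · refine union_subset (p.subset_Icc.trans (Icc_subset_Icc ?_ ?_)) (Icc_subset_Icc ?_ ?_) <;>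
      linarith [abs_nonneg x, neg_abs_le x, le_abs_self x]
  · show p.radius + 1 ≤ p.radius + |x| + δ + 1
    linarith [abs_nonneg x]
  · rintro t ⟨ht | ht, hwindow⟩
    · exact ht
    · rcases hfar with hx | hx <;> linarith [ht.1, ht.2, hwindow.1, hwindow.2]
  · calc volume (p.set ∪ Icc x (x + δ)) ≤ volume p.set + volume (Icc x (x + δ)) :=
          measure_union_le _ _
      _ = volume p.set + ENNReal.ofReal δ := by rw [Real.volume_Icc, add_sub_cancel_left]

noncomputable def stageSeq (hii : M.IntervalInfinite)
    (hIcc : ∀ a b : ℝ, a ≤ b → Icc a b ∈ M.D) {ε : ℝ} (hε : 0 < ε) : ℕ → M.Stage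
  | 0 => ⟨Icc 0 0, 0, hIcc 0 0 le_rfl, by simp⟩
  | n + 1 => ((stageSeq hii hIcc hε n).exists_extends hii hIcc n
      (δ := ε / 2 ^ (n + 2)) (by positivity)).choose

section stageSeq

variable (hii : M.IntervalInfinite) (hIcc : ∀ a b : ℝ, a ≤ b → Icc a b ∈ M.D) {ε : ℝ}
  (hε : 0 < ε)

theorem stageSeq_extends (n : ℕ) :
    (stageSeq hii hIcc hε n).Extends n (ε / 2 ^ (n + 2)) (stageSeq hii hIcc hε (n + 1)) :=
  ((stageSeq hii hIcc hε n).exists_extends hii hIcc n (by positivity)).choose_spec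

theorem monotone_stageSeq_set : Monotone fun n => (stageSeq hii hIcc hε n).set :=
  monotone_nat_of_le_succ fun n => (stageSeq_extends hii hIcc hε n).set_subset

theorem natCast_le_stageSeq_radius (n : ℕ) : (n : ℝ) ≤ (stageSeq hii hIcc hε n).radius := by
  induction n with
  | zero => simp [stageSeq]
  | succ n ih => push_cast; linarith [(stageSeq_extends hii hIcc hε n).radius_add_one_le]

theorem monotone_stageSeq_radius : Monotone fun n => (stageSeq hii hIcc hε n).radius :=
  monotone_nat_of_le_succ fun n => by
    linarith [(stageSeq_extends hii hIcc hε n).radius_add_one_le]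

theorem iUnion_stageSeq_inter_Icc (n : ℕ) :
    (⋃ k, (stageSeq hii hIcc hε k).set) ∩
        Icc (-(stageSeq hii hIcc hε n).radius) (stageSeq hii hIcc hε n).radius =
      (stageSeq hii hIcc hε n).set := by
  have hr := monotone_stageSeq_radius hii hIcc hε
  exact iUnion_inter_eq_of_monotone (monotone_stageSeq_set hii hIcc hε)
    (fun _ _ h => Icc_subset_Icc (neg_le_neg (hr h)) (hr h))
    (fun n => (stageSeq hii hIcc hε n).subset_Icc)
    (fun n => (stageSeq_extends hii hIcc hε n).inter_Icc_subset) n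

theorem volume_stageSeq_add_le (n : ℕ) :
    volume (stageSeq hii hIcc hε n).set + ENNReal.ofReal (ε / 2 ^ (n + 1)) ≤
      ENNReal.ofReal (ε / 2) := by
  induction n with
  | zero => simp [stageSeq]
  | succ n ih =>
    have hhalves : ENNReal.ofReal (ε / 2 ^ (n + 2)) + ENNReal.ofReal (ε / 2 ^ (n + 2)) =
        ENNReal.ofReal (ε / 2 ^ (n + 1)) := by
      rw [← ENNReal.ofReal_add (by positivity) (by positivity)]
      congr 1
      ring
    calc volume (stageSeq hii hIcc hε (n + 1)).set + ENNReal.ofReal (ε / 2 ^ (n + 1 + 1))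
        ≤ volume (stageSeq hii hIcc hε n).set + ENNReal.ofReal (ε / 2 ^ (n + 2)) +
            ENNReal.ofReal (ε / 2 ^ (n + 2)) :=
          add_le_add_left (stageSeq_extends hii hIcc hε n).volume_le _
      _ = volume (stageSeq hii hIcc hε n).set + ENNReal.ofReal (ε / 2 ^ (n + 1)) := by
          rw [add_assoc, hhalves]
      _ ≤ ENNReal.ofReal (ε / 2) := ih

theorem volume_iUnion_stageSeq_lt :
    volume (⋃ k, (stageSeq hii hIcc hε k).set) < ENNReal.ofReal ε := by
  rw [(monotone_stageSeq_set hii hIcc hε).measure_iUnion]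
  refine (iSup_le fun n => le_self_add.trans (volume_stageSeq_add_le hii hIcc hε n)).trans_lt ?_
  exact ENNReal.ofReal_lt_ofReal_iff hε |>.2 (by linarith)

theorem infinite_setOf_one_lt_K_stageSeq :
    {n | 1 < M.K (stageSeq hii hIcc hε n).set}.Infinite :=
  infinite_of_injective_forall_mem (f := fun k => 2 * k + 1)
    (fun _ _ h => by simp only at h; omega)
    fun k => (stageSeq_extends hii hIcc hε (2 * k)).one_lt_K (even_two_mul k)

theorem infinite_setOf_K_stageSeq_lt :
    {n | M.K (stageSeq hii hIcc hε n).set < -1}.Infinite :=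
  infinite_of_injective_forall_mem (f := fun k => 2 * k + 2)
    (fun _ _ h => by simp only at h; omega)
    fun k => (stageSeq_extends hii hIcc hε (2 * k + 1)).K_lt (odd_two_mul_add_one k)

end stageSeq

end GenMean

theorem stmt_6 (M : GenMean) (hii : M.IntervalInfinite)
    (hIcc : ∀ a b : ℝ, a ≤ b → Icc a b ∈ M.D) :
    ∀ ε : ℝ, 0 < ε → ∃ H : Set ℝ, ∃ x y : ℕ → ℝ,
      Tendsto x atTop atBot ∧ Tendsto y atTop atTop ∧
      MeasureTheory.volume H < ENNReal.ofReal ε ∧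
      (∀ n : ℕ, H ∩ Icc (x n) (y n) ∈ M.D) ∧
      (¬ ∃ L : EReal, Tendsto (fun n : ℕ => M.K (H ∩ Icc (x n) (y n))) atTop (nhds L)) ∧
      {n : ℕ | 1 < M.K (H ∩ Icc (x n) (y n))}.Infinite ∧
      {n : ℕ | M.K (H ∩ Icc (x n) (y n)) < -1}.Infinite := by
  intro ε hε
  refine ⟨⋃ k, (M.stageSeq hii hIcc hε k).set, fun n => -(M.stageSeq hii hIcc hε n).radius,
    fun n => (M.stageSeq hii hIcc hε n).radius, ?_, ?_,
    M.volume_iUnion_stageSeq_lt hii hIcc hε, ?_⟩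
  · exact tendsto_neg_atTop_atBot.comp <| tendsto_atTop_mono
      (M.natCast_le_stageSeq_radius hii hIcc hε) tendsto_natCast_atTop_atTop
  · exact tendsto_atTop_mono (M.natCast_le_stageSeq_radius hii hIcc hε)
      tendsto_natCast_atTop_atTop
  simp only [M.iUnion_stageSeq_inter_Icc hii hIcc hε]
  have hhigh := M.infinite_setOf_one_lt_K_stageSeq hii hIcc hε
  have hlow := M.infinite_setOf_K_stageSeq_lt hii hIcc hε
  refine ⟨fun n => (M.stageSeq hii hIcc hε n).mem, ?_, hhigh, hlow⟩
  exact not_tendsto_of_frequently_lt_of_frequently_gt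
    ((EReal.neg_lt_zero.2 zero_lt_one).trans zero_lt_one)
    (Nat.frequently_atTop_iff_infinite.2 hlow) (Nat.frequently_atTop_iff_infinite.2 hhigh)
end

section
/- Let (K, D) be a generalized mean whose domain D contains only bounded sets, and suppose K is disjoint-monotone. Let H₁, H₂ ⊆ ℝ with H₁ ∩ H₂ = ∅ be such that K̂(H₁), K̂(H₂) and K̂(H₁ ∪ H₂) all exist, K̂(H₁) ≤ K̂(H₂), and either K̂(H₁) < K̂(H₂) or K̂(H₁) = K̂(H₂) ∈ ℝ. Then K̂(H₁) ≤ K̂(H₁ ∪ H₂) ≤ K̂(H₂). -/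
open Set Filter Topology Bornology

theorem stmt_17 (M : GenMean) (hbdd : ∀ A ∈ M.D, IsBounded A)
    (hdm : M.DisjointMonotone)
    (H₁ H₂ : Set ℝ) (hdisj : Disjoint H₁ H₂)
    (hmem1 : ∀ x y : ℝ, x ≤ y → (H₁ ∩ Icc x y).Nonempty → H₁ ∩ Icc x y ∈ M.D)
    (hmem2 : ∀ x y : ℝ, x ≤ y → (H₂ ∩ Icc x y).Nonempty → H₂ ∩ Icc x y ∈ M.D)
    (hmem12 : ∀ x y : ℝ, x ≤ y → ((H₁ ∪ H₂) ∩ Icc x y).Nonempty →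
      (H₁ ∪ H₂) ∩ Icc x y ∈ M.D)
    (L₁ L₂ L : EReal) (h1 : M.HatLim H₁ L₁) (h2 : M.HatLim H₂ L₂)
    (h12 : M.HatLim (H₁ ∪ H₂) L)
    (hle : L₁ ≤ L₂)
    (hcase : L₁ < L₂ ∨ (L₁ = L₂ ∧ ∃ r : ℝ, L₁ = (r : EReal))) :
    L₁ ≤ L ∧ L ≤ L₂ := by
  rcases H₁.eq_empty_or_nonempty with h1e | ⟨p₁, hp₁⟩
  · -- H₁ empty: union = H₂, so L = L₂
    have heq : L = L₂ := by
      refine tendsto_nhds_unique ?_ h2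
      have : (fun p : ℝ × ℝ => M.K ((H₁ ∪ H₂) ∩ Icc p.1 p.2))
          = fun p : ℝ × ℝ => M.K (H₂ ∩ Icc p.1 p.2) := by
        funext p; rw [h1e, Set.empty_union]
      rw [← this]; exact h12
    exact ⟨heq ▸ hle, heq.le⟩
  rcases H₂.eq_empty_or_nonempty with h2e | ⟨p₂, hp₂⟩
  · have heq : L = L₁ := by
      refine tendsto_nhds_unique ?_ h1
      have : (fun p : ℝ × ℝ => M.K ((H₁ ∪ H₂) ∩ Icc p.1 p.2))
          = fun p : ℝ × ℝ => M.K (H₁ ∩ Icc p.1 p.2) := by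
        funext p; rw [h2e, Set.union_empty]
      rw [← this]; exact h12
    exact ⟨heq.ge, heq ▸ hle⟩
  -- main case: both nonempty
  have hev : ∀ᶠ p : ℝ × ℝ in atBot ×ˢ atTop,
      min (M.K (H₁ ∩ Icc p.1 p.2)) (M.K (H₂ ∩ Icc p.1 p.2))
        ≤ M.K ((H₁ ∪ H₂) ∩ Icc p.1 p.2) ∧
      M.K ((H₁ ∪ H₂) ∩ Icc p.1 p.2)
        ≤ max (M.K (H₁ ∩ Icc p.1 p.2)) (M.K (H₂ ∩ Icc p.1 p.2)) := by
    filter_upwards [(eventually_le_atBot (min p₁ p₂)).prod_mk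
      (eventually_ge_atTop (max p₁ p₂))] with p hp
    obtain ⟨hx, hy⟩ := hp
    have hxy : p.1 ≤ p.2 := le_trans (hx.trans (min_le_left _ _))
      ((le_max_left p₁ p₂).trans hy)
    have hn1 : (H₁ ∩ Icc p.1 p.2).Nonempty :=
      ⟨p₁, hp₁, hx.trans (min_le_left _ _), (le_max_left p₁ p₂).trans hy⟩
    have hn2 : (H₂ ∩ Icc p.1 p.2).Nonempty :=
      ⟨p₂, hp₂, hx.trans (min_le_right _ _), (le_max_right p₁ p₂).trans hy⟩
    have hA := hmem1 p.1 p.2 hxy hn1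
    have hB := hmem2 p.1 p.2 hxy hn2
    have hU : (H₁ ∩ Icc p.1 p.2) ∪ (H₂ ∩ Icc p.1 p.2) ∈ M.D := by
      rw [← Set.union_inter_distrib_right]
      exact hmem12 p.1 p.2 hxy ⟨p₁, Or.inl hp₁,
        hx.trans (min_le_left _ _), (le_max_left p₁ p₂).trans hy⟩
    have hd : Disjoint (H₁ ∩ Icc p.1 p.2) (H₂ ∩ Icc p.1 p.2) :=
      hdisj.mono Set.inter_subset_left Set.inter_subset_left
    have hrw : (H₁ ∪ H₂) ∩ Icc p.1 p.2
        = (H₁ ∩ Icc p.1 p.2) ∪ (H₂ ∩ Icc p.1 p.2) :=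
      Set.union_inter_distrib_right _ _ _
    rw [hrw]
    rcases le_total (M.K (H₁ ∩ Icc p.1 p.2)) (M.K (H₂ ∩ Icc p.1 p.2)) with h | h
    · have := hdm _ hA _ hB hU hd h
      exact ⟨le_trans (min_le_left _ _) this.1, this.2.trans (le_max_right _ _)⟩
    · have := hdm _ hB _ hA (Set.union_comm _ _ ▸ hU) hd.symm h
      rw [Set.union_comm]
      exact ⟨le_trans (min_le_right _ _) this.1, this.2.trans (le_max_left _ _)⟩
  have hmin : Tendsto (fun p : ℝ × ℝ =>
      min (M.K (H₁ ∩ Icc p.1 p.2)) (M.K (H₂ ∩ Icc p.1 p.2)))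
      (atBot ×ˢ atTop) (nhds L₁) := by
    have := h1.min h2
    rwa [min_eq_left hle] at this
  have hmax : Tendsto (fun p : ℝ × ℝ =>
      max (M.K (H₁ ∩ Icc p.1 p.2)) (M.K (H₂ ∩ Icc p.1 p.2)))
      (atBot ×ˢ atTop) (nhds L₂) := by
    have := h1.max h2
    rwa [max_eq_right hle] at this
  constructor
  · exact le_of_tendsto_of_tendsto hmin h12 (hev.mono fun p h => h.1)
  · exact le_of_tendsto_of_tendsto h12 hmax (hev.mono fun p h => h.2)
end

section
/- Let μ be a Borel measure on ℝ that is finite on compact sets, and let H ⊆ ℝ be μ-measurable with inf H > −∞ and μ(H) = +∞. Then lim_{y→+∞} M^μ(H ∩ (−∞, y]) = +∞; that is, (∫_{H ∩ (−∞, y]} x dμ(x))/μ(H ∩ (−∞, y]) → +∞ as y → +∞ (note that μ(H ∩ (−∞, y]) is positive and finite for all sufficiently large y). -/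
/-! Fix a level `c`. Above `c` the integrand `t - c` is nonnegative, so
`∫_{H ∩ (-∞, y]} (t - c) dμ` is bounded below by the constant `K = ∫_{H ∩ (-∞, c]} (t - c) dμ`
for all `y ≥ c`. Dividing by `μ(H ∩ (-∞, y])`, which tends to `+∞`, the mean is at least
`c + K / μ(H ∩ (-∞, y]) → c`. As `c` is arbitrary, the mean tends to `+∞`. -/

open Set Filter Topology MeasureTheory ENNReal

theorem ENNReal.tendsto_toReal_atTop_of_tendsto_top {α : Type*} {l : Filter α} {f : α → ℝ≥0∞}
    (hf : Tendsto f l (𝓝 ∞)) (hfin : ∀ x, f x ≠ ∞) : Tendsto (fun x => (f x).toReal) l atTop := by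
  refine tendsto_atTop.2 fun C => ?_
  filter_upwards [ENNReal.tendsto_nhds_top_iff_nnreal.1 hf C.toNNReal] with x hx
  exact (Real.le_coe_toNNReal C).trans (toReal_le_toReal coe_ne_top (hfin x) |>.2 hx.le)

namespace MeasureTheory

variable {μ : Measure ℝ} {H : Set ℝ}

variable (μ H) in
theorem tendsto_measure_inter_Iic_atTop :
    Tendsto (fun y => μ (H ∩ Iic y)) atTop (𝓝 (μ H)) := by
  have hmono : Monotone fun y => H ∩ Iic y := fun _ _ h =>
    inter_subset_inter_right _ (Iic_subset_Iic.2 h)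
  simpa [Function.comp_def, ← inter_iUnion, iUnion_Iic] using
    tendsto_measure_iUnion_atTop (μ := μ) hmono

theorem measure_inter_Iic_lt_top [IsFiniteMeasureOnCompacts μ] (hH : BddBelow H) (y : ℝ) :
    μ (H ∩ Iic y) < ∞ := by
  obtain ⟨a, ha⟩ := hH
  have hsub : H ∩ Iic y ⊆ Icc a y := fun x hx => ⟨ha hx.1, hx.2⟩
  exact (measure_mono hsub).trans_lt isCompact_Icc.measure_lt_top

theorem integrableOn_inter_Iic [IsFiniteMeasureOnCompacts μ] (hH : BddBelow H) (y : ℝ) :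
    IntegrableOn (fun t => t) (H ∩ Iic y) μ := by
  obtain ⟨a, ha⟩ := hH
  exact (continuous_id.integrableOn_Icc (a := a) (b := y)).mono_set fun x hx => ⟨ha hx.1, hx.2⟩

theorem setIntegral_inter_Iic_sub_le (hH : MeasurableSet H) {c y : ℝ} (hcy : c ≤ y)
    (hint : IntegrableOn (fun t => t) (H ∩ Iic y) μ) (hfin : μ (H ∩ Iic y) ≠ ∞) :
    ∫ t in H ∩ Iic c, (t - c) ∂μ ≤ (∫ t in H ∩ Iic y, t ∂μ) - c * μ.real (H ∩ Iic y) := by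
  have hint' : IntegrableOn (fun t => t - c) (H ∩ Iic y) μ := hint.sub (integrableOn_const hfin)
  have hcut : H ∩ Iic y ∩ Iic c = H ∩ Iic c := by
    rw [inter_assoc, Iic_inter_Iic, min_eq_right hcy]
  have habove : 0 ≤ ∫ t in (H ∩ Iic y) \ Iic c, (t - c) ∂μ :=
    setIntegral_nonneg ((hH.inter measurableSet_Iic).diff measurableSet_Iic)
      fun t ht => sub_nonneg.2 (not_le.1 ht.2).le
  have hsplit := integral_inter_add_sdiff (measurableSet_Iic (a := c)) hint'
  rw [hcut, integral_sub hint (integrableOn_const hfin), setIntegral_const, smul_eq_mul,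
    mul_comm] at hsplit
  linarith

theorem const_add_div_le_setIntegral_div (hH : MeasurableSet H) {c y : ℝ} (hcy : c ≤ y)
    (hint : IntegrableOn (fun t => t) (H ∩ Iic y) μ) (hfin : μ (H ∩ Iic y) ≠ ∞)
    (hpos : 0 < μ.real (H ∩ Iic y)) :
    c + (∫ t in H ∩ Iic c, (t - c) ∂μ) / μ.real (H ∩ Iic y) ≤
      (∫ t in H ∩ Iic y, t ∂μ) / μ.real (H ∩ Iic y) := by
  rw [le_div_iff₀ hpos, add_mul, div_mul_cancel₀ _ hpos.ne']
  linarith [setIntegral_inter_Iic_sub_le hH hcy hint hfin]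

end MeasureTheory

theorem stmt_18 (μ : MeasureTheory.Measure ℝ)
    [MeasureTheory.IsFiniteMeasureOnCompacts μ]
    (H : Set ℝ) (hHm : MeasurableSet H) (hbb : BddBelow H) (hinf : μ H = ⊤) :
    (∀ᶠ y in atTop, 0 < μ (H ∩ Iic y) ∧ μ (H ∩ Iic y) < ⊤) ∧
    Tendsto (fun y : ℝ => (∫ t in H ∩ Iic y, t ∂μ) / (μ (H ∩ Iic y)).toReal)
      atTop atTop := by
  have hfin := measure_inter_Iic_lt_top (μ := μ) hbb
  have hμ : Tendsto (fun y => μ (H ∩ Iic y)) atTop (𝓝 ∞) :=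
    hinf ▸ tendsto_measure_inter_Iic_atTop μ H
  have hreal : Tendsto (fun y => μ.real (H ∩ Iic y)) atTop atTop :=
    ENNReal.tendsto_toReal_atTop_of_tendsto_top hμ fun y => (hfin y).ne
  refine ⟨?_, tendsto_atTop.2 fun b => ?_⟩
  · filter_upwards [hμ.eventually (lt_mem_nhds zero_lt_top)] with y hy using ⟨hy, hfin y⟩
  · set K := ∫ t in H ∩ Iic (b + 1), (t - (b + 1)) ∂μ
    have hlim : Tendsto (fun y => b + 1 + K / μ.real (H ∩ Iic y)) atTop (𝓝 (b + 1)) := by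
      simpa using tendsto_const_nhds.add (tendsto_const_nhds.div_atTop hreal)
    filter_upwards [hlim.eventually (lt_mem_nhds (lt_add_one b)), eventually_ge_atTop (b + 1),
      hreal.eventually_gt_atTop 0] with y hb hy hpos
    exact hb.le.trans (const_add_div_le_setIntegral_div hHm hy (integrableOn_inter_Iic hbb y)
      (hfin y).ne hpos)
end
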